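/- arXiv:0906.4031 — 4 statements merged into one kernel-verified Lean document; each statement's English description precedes it below -/
import Mathlib

section
/- For the Reeve tetrahedron P_h with vertices (0,0,0), (1,0,0), (0,1,0), (1,1,h) (h a positive integer), the number of lattice points in the dilate tP_h equals (h/6)t³ + t² + (2 − h/6)t + 1 for every positive integer t. -/
/-!
For `h > 0` the tetrahedron `t • P_h` is cut out by the four facet inequalities
`0 ≤ z`, `z ≤ h x`, `z ≤ h y`, `h (x + y) ≤ h t + z` (its barycentric coordinates, up to the
factor `h t`). Hence its lattice points lie over the `(a, b) ∈ {0, …, t}²`, and over `(a, b)`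
the height `c` runs through the interval `[h (a + b - t)⁺, h min(a, b)]`. Summing the fibre
sizes needs `∑ min(a, b) = t(t+1)(2t+1)/6` and `∑ (a + b - t)⁺ = t(t+1)(t+2)/6`; the second
follows from the first, since reflecting `b ↦ t - b` turns `(a + b - t)⁺` into `(a - b)⁺` and
`min(a, b) + (a - b)⁺ = a`. The total is `h (t³ - t)/6 + (t + 1)²`.
-/

open MeasureTheory Metric Set Filter Pointwise

/-- The ratio `vol(B(r,x) ∩ P) / vol(B(r,x))`. -/
noncomputable def angleRatio {d : ℕ} (P : Set (EuclideanSpace ℝ (Fin d)))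
    (x : EuclideanSpace ℝ (Fin d)) (r : ℝ) : ℝ :=
  (volume (closedBall x r ∩ P)).toReal / (volume (closedBall x r)).toReal

/-- The solid angle of `x` with respect to `P`:
`ω_P(x) = lim_{r→0⁺} vol(B(r,x) ∩ P)/vol(B(r,x))`. -/
noncomputable def solidAngle {d : ℕ} (P : Set (EuclideanSpace ℝ (Fin d)))
    (x : EuclideanSpace ℝ (Fin d)) : ℝ :=
  limUnder (nhdsWithin (0 : ℝ) (Ioi 0)) (angleRatio P x)

/-- The solid-angle sum `A_P(t) = Σ_{m ∈ ℤ^d} ω_{tP}(m)`. -/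
noncomputable def solidAngleSum {d : ℕ} (P : Set (EuclideanSpace ℝ (Fin d))) (t : ℕ) : ℝ :=
  ∑' m : Fin d → ℤ, solidAngle ((t : ℝ) • P) (WithLp.toLp 2 (fun i => (m i : ℝ)) : EuclideanSpace ℝ (Fin d))

/-- The Reeve tetrahedron `P_h = conv{(0,0,0),(1,0,0),(0,1,0),(1,1,h)}`. -/
noncomputable def reeve (h : ℕ) : Set (EuclideanSpace ℝ (Fin 3)) :=
  convexHull ℝ {(WithLp.toLp 2 ![0,0,0] : EuclideanSpace ℝ (Fin 3)), WithLp.toLp 2 ![1,0,0], WithLp.toLp 2 ![0,1,0], WithLp.toLp 2 ![1,1,(h:ℝ)]}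

theorem mem_reeve_iff {h : ℕ} (hh : 0 < h) {y : EuclideanSpace ℝ (Fin 3)} :
    y ∈ reeve h ↔
      0 ≤ y 2 ∧ y 2 ≤ h * y 0 ∧ y 2 ≤ h * y 1 ∧ h * (y 0 + y 1) ≤ h + y 2 := by
  have hh' : (0 : ℝ) < h := by exact_mod_cast hh
  constructor
  · refine fun hy => convexHull_min (t := {v : EuclideanSpace ℝ (Fin 3) | 0 ≤ v 2 ∧
      v 2 ≤ h * v 0 ∧ v 2 ≤ h * v 1 ∧ h * (v 0 + v 1) ≤ (h : ℝ) + v 2}) ?_ ?_ hy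
    · rintro v (rfl | rfl | rfl | rfl) <;> simp [hh'.le, ← two_mul, mul_comm]
    · rintro u ⟨u₀, u₁, u₂, u₃⟩ v ⟨v₀, v₁, v₂, v₃⟩ a b ha hb hab
      simp only [mem_ofPred_eq, PiLp.add_apply, PiLp.smul_apply, smul_eq_mul]
      refine ⟨by positivity, ?_, ?_, ?_⟩ <;> nlinarith
  · rintro ⟨h₀, h₁, h₂, h₃⟩
    -- barycentric coordinates of `y`, scaled by `h`
    let w : Fin 4 → ℝ := ![h + y 2 - h * (y 0 + y 1), h * y 0 - y 2, h * y 1 - y 2, y 2]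
    let z : Fin 4 → EuclideanSpace ℝ (Fin 3) :=
      ![WithLp.toLp 2 ![0,0,0], WithLp.toLp 2 ![1,0,0], WithLp.toLp 2 ![0,1,0],
        WithLp.toLp 2 ![1,1,(h:ℝ)]]
    have hy : y = ∑ i, (w i / h) • z i := by
      ext i
      fin_cases i <;> simp [w, z, Fin.sum_univ_four] <;> field_simp <;> ring
    rw [hy]
    refine (convex_convexHull ℝ _).sum_mem (fun i _ => ?_) ?_ (fun i _ => ?_)
    · fin_cases i <;> simp [w] <;> positivity
    · simp [w, Fin.sum_univ_four]; field_simp; ring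
    · fin_cases i <;> exact subset_convexHull ℝ _ (by simp [z])

theorem mem_smul_reeve_iff {h : ℕ} (hh : 0 < h) {s : ℝ} (hs : 0 < s)
    {y : EuclideanSpace ℝ (Fin 3)} :
    y ∈ s • reeve h ↔
      0 ≤ y 2 ∧ y 2 ≤ h * y 0 ∧ y 2 ≤ h * y 1 ∧ h * (y 0 + y 1) ≤ h * s + y 2 := by
  rw [mem_smul_set_iff_inv_smul_mem₀ hs.ne', mem_reeve_iff hh]
  simp only [PiLp.smul_apply, smul_eq_mul, ← mul_add, mul_left_comm (h : ℝ) s⁻¹]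
  have hs' := inv_pos.2 hs
  rw [mul_nonneg_iff_of_pos_left hs', mul_le_mul_iff_of_pos_left hs',
    mul_le_mul_iff_of_pos_left hs', ← mul_le_mul_iff_of_pos_left hs]
  field_simp

theorem six_mul_sum_range_sum_range_min (n : ℕ) :
    6 * ∑ a ∈ Finset.range (n + 1), ∑ b ∈ Finset.range (n + 1), min a b =
      n * (n + 1) * (2 * n + 1) := by
  induction n with
  | zero => simp
  | succ n ih =>
    have hgauss := Finset.sum_range_id_mul_two (n + 1)
    have hrow : ∑ a ∈ Finset.range (n + 1), min a (n + 1) = ∑ a ∈ Finset.range (n + 1), a :=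
      Finset.sum_congr rfl fun a ha => min_eq_left (Finset.mem_range.1 ha).le
    have hcol : ∑ b ∈ Finset.range (n + 1), min (n + 1) b = ∑ b ∈ Finset.range (n + 1), b :=
      Finset.sum_congr rfl fun b hb => min_eq_right (Finset.mem_range.1 hb).le
    simp only [Finset.sum_range_succ _ (n + 1), Finset.sum_add_distrib, hrow, hcol, min_self]
    simp only [add_tsub_cancel_right] at hgauss
    linear_combination ih + 6 * hgauss

theorem sum_range_sum_range_min_add_tsub (n : ℕ) :
    ∑ a ∈ Finset.range (n + 1), ∑ b ∈ Finset.range (n + 1), min a b +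
      ∑ a ∈ Finset.range (n + 1), ∑ b ∈ Finset.range (n + 1), (a + b - n) =
      (n + 1) * ∑ a ∈ Finset.range (n + 1), a := by
  rw [← Finset.sum_add_distrib, Finset.mul_sum]
  refine Finset.sum_congr rfl fun a _ => ?_
  rw [← Finset.sum_range_reflect (fun b => a + b - n), ← Finset.sum_add_distrib]
  calc _ = ∑ _b ∈ Finset.range (n + 1), a :=
        Finset.sum_congr rfl fun b hb => by have := Finset.mem_range.1 hb; omega
    _ = (n + 1) * a := by simp

def reeveLatticePoints (h t : ℕ) : Finset (Σ _ : ℕ × ℕ, ℕ) :=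
  (Finset.range (t + 1) ×ˢ Finset.range (t + 1)).sigma fun p =>
    Finset.Icc (h * (p.1 + p.2 - t)) (h * min p.1 p.2)

theorem card_reeveLatticePoints_add (h t : ℕ) :
    (reeveLatticePoints h t).card +
        h * ∑ a ∈ Finset.range (t + 1), ∑ b ∈ Finset.range (t + 1), (a + b - t) =
      h * ∑ a ∈ Finset.range (t + 1), ∑ b ∈ Finset.range (t + 1), min a b + (t + 1) ^ 2 := by
  have hsq : (t + 1) ^ 2 = ∑ _a ∈ Finset.range (t + 1), ∑ _b ∈ Finset.range (t + 1), 1 := by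
    simp [sq]
  simp only [reeveLatticePoints, Finset.card_sigma, Finset.sum_product, Finset.mul_sum, hsq,
    ← Finset.sum_add_distrib]
  refine Finset.sum_congr rfl fun a ha => Finset.sum_congr rfl fun b hb => ?_
  have hle : h * (a + b - t) ≤ h * min a b := by
    simp only [Finset.mem_range] at ha hb
    exact Nat.mul_le_mul_left h (by omega)
  rw [Nat.card_Icc]
  omega

theorem mem_image_reeveLatticePoints_iff {h : ℕ} (hh : 0 < h) {t : ℕ} {m : Fin 3 → ℤ} :
    m ∈ (fun p : Σ _ : ℕ × ℕ, ℕ => ![(p.1.1 : ℤ), p.1.2, p.2]) '' reeveLatticePoints h t ↔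
      0 ≤ m 2 ∧ m 2 ≤ h * m 0 ∧ m 2 ≤ h * m 1 ∧ h * (m 0 + m 1) ≤ h * t + m 2 := by
  simp only [reeveLatticePoints, Finset.coe_sigma, Set.mem_image, Set.mem_sigma_iff,
    Finset.coe_product, Set.mem_prod, Finset.coe_range, Set.mem_Iio, Finset.coe_Icc,
    Set.mem_Icc, Sigma.exists, Prod.exists]
  constructor
  · rintro ⟨a, b, c, ⟨⟨ha, hb⟩, hc₁, hc₂⟩, rfl⟩
    rw [Nat.mul_sub] at hc₁
    rw [← Nat.mul_min_mul_left] at hc₂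
    simp only [Matrix.cons_val]
    refine ⟨by positivity, ?_, ?_, ?_⟩ <;> norm_cast <;> omega
  · rintro ⟨h₀, h₁, h₂, h₃⟩
    obtain ⟨a, ha⟩ := Int.eq_ofNat_of_zero_le (show 0 ≤ m 0 by nlinarith)
    obtain ⟨b, hb⟩ := Int.eq_ofNat_of_zero_le (show 0 ≤ m 1 by nlinarith)
    obtain ⟨c, hc⟩ := Int.eq_ofNat_of_zero_le h₀
    simp only [ha, hb, hc] at h₁ h₂ h₃
    norm_cast at h₁ h₂ h₃
    rw [Nat.mul_add] at h₃
    refine ⟨a, b, c, ⟨⟨?_, ?_⟩, ?_, ?_⟩, ?_⟩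
    · exact Nat.lt_succ_of_le (Nat.le_of_mul_le_mul_left (by omega) hh)
    · exact Nat.lt_succ_of_le (Nat.le_of_mul_le_mul_left (by omega) hh)
    · rw [Nat.mul_sub, Nat.mul_add]; omega
    · rw [← Nat.mul_min_mul_left]; omega
    · ext i; fin_cases i <;> simp [ha, hb, hc]

theorem intCast_mem_smul_reeve_iff {h : ℕ} (hh : 0 < h) {t : ℕ} (ht : 0 < t)
    {m : Fin 3 → ℤ} :
    (WithLp.toLp 2 (fun i => (m i : ℝ)) : EuclideanSpace ℝ (Fin 3)) ∈ (t : ℝ) • reeve h ↔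
      0 ≤ m 2 ∧ m 2 ≤ h * m 0 ∧ m 2 ≤ h * m 1 ∧ h * (m 0 + m 1) ≤ h * t + m 2 := by
  rw [mem_smul_reeve_iff hh (by positivity)]
  dsimp only
  norm_cast

theorem card_latticePoints_smul_reeve {h : ℕ} (hh : 0 < h) {t : ℕ} (ht : 0 < t) :
    Nat.card {m : Fin 3 → ℤ //
        (WithLp.toLp 2 (fun i => (m i : ℝ)) : EuclideanSpace ℝ (Fin 3)) ∈ (t : ℝ) • reeve h} =
      (reeveLatticePoints h t).card := by
  have hinj : Function.Injective fun p : Σ _ : ℕ × ℕ, ℕ => ![(p.1.1 : ℤ), p.1.2, p.2] := by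
    rintro ⟨⟨a, b⟩, c⟩ ⟨⟨a', b'⟩, c'⟩ h
    simp only [funext_iff, Fin.forall_fin_succ] at h
    simp_all
  rw [Nat.card_congr (Equiv.subtypeEquivRight fun m =>
      (intCast_mem_smul_reeve_iff hh ht).trans (mem_image_reeveLatticePoints_iff hh).symm),
    Nat.card_image_of_injective hinj, Nat.card_coe_set_eq, Set.ncard_coe_finset]

/-- The Ehrhart polynomial of the Reeve tetrahedron:
`L_{P_h}(t) = (h/6)t³ + t² + (2 − h/6)t + 1`. -/
theorem ehrhart_reeve (h : ℕ) (hh : 0 < h) (t : ℕ) (ht : 0 < t) :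
    (Nat.card {m : Fin 3 → ℤ //
        (WithLp.toLp 2 (fun i => (m i : ℝ)) : EuclideanSpace ℝ (Fin 3)) ∈ (t : ℝ) • reeve h} : ℝ) =
      (h : ℝ) / 6 * t ^ 3 + t ^ 2 + (2 - (h : ℝ) / 6) * t + 1 := by
  rw [card_latticePoints_smul_reeve hh ht]
  have hcount := card_reeveLatticePoints_add h t
  have hsplit := sum_range_sum_range_min_add_tsub t
  have hmin := six_mul_sum_range_sum_range_min t
  have hgauss := Finset.sum_range_id_mul_two (t + 1)
  rw [add_tsub_cancel_right] at hgauss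
  rify at hcount hsplit hmin hgauss
  linear_combination hcount - h * hsplit + h / 3 * hmin - h * (t + 1) / 2 * hgauss
end

section
/- For a d-simplex Δ with d > 2, the sum of the solid angles at the vertices of Δ is strictly less than 1/2; for d = 2 it equals exactly 1/2. -/
open MeasureTheory Metric Set Filter Pointwise

/-!
Near a vertex `b i` the simplex coincides with `b i + K i`, where
`K i = {y | ∀ k ≠ i, 0 ≤ ℓₖ y}` and `ℓₖ` is the linear part of the `k`-th barycentric coordinate,
so the solid angle at `b i` is the proportion of the unit ball lying in `K i`. Since `∑ ℓₖ = 0`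
and the `ℓₖ` separate points, two distinct cones among the `2(d+1)` cones `±K i` meet only where
all but two `ℓₖ` vanish, which is a line; hence twice the sum of the solid angles is the
proportion of the ball covered by their union. A vector lies in that union iff at most one `ℓₖ y`
is negative or at most one is positive. With three coordinates (`d = 2`) this always holds; with
four or more, the open cone where `ℓ₀, ℓ₁ < 0 < ℓ₂, ℓ₃` is nonempty and missed by the union.
-/

open scoped Topology

namespace AffineBasis

section Cones

variable {ι V P : Type*} [AddCommGroup V] [Module ℝ V] [AddTorsor V P]
  (b : AffineBasis ι ℝ P)

lemma sum_coord_linear_apply [Fintype ι] (y : V) : ∑ k, (b.coord k).linear y = 0 := by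
  obtain ⟨i⟩ := b.nonempty
  have h := b.sum_coord_apply_eq_one (y +ᵥ b i)
  simp only [AffineMap.map_vadd, vadd_eq_add, Finset.sum_add_distrib,
    b.sum_coord_apply_eq_one] at h
  linarith

lemma eq_zero_of_coord_linear_eq_zero [Finite ι] {y : V} (h : ∀ k, (b.coord k).linear y = 0) :
    y = 0 := by
  obtain ⟨i⟩ := b.nonempty
  have : y +ᵥ b i = (0 : V) +ᵥ b i :=
    b.ext_elem fun k => by rw [AffineMap.map_vadd, AffineMap.map_vadd, h, map_zero]
  exact vadd_right_cancel _ this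

lemma eq_zero_of_coord_linear_eq_zero_of_ne [Fintype ι] (j : ι) {y : V}
    (h : ∀ k, k ≠ j → (b.coord k).linear y = 0) : y = 0 := by
  refine b.eq_zero_of_coord_linear_eq_zero fun k => ?_
  obtain rfl | hk := eq_or_ne k j
  · rw [← b.sum_coord_linear_apply y, Finset.sum_eq_single k (fun l _ hl => h l hl) (by simp)]
  · exact h k hk

/-- The tangent cone of the simplex at the vertex `b i`, translated to the origin. -/
def vertexCone (i : ι) : Set V := {y | ∀ k, k ≠ i → 0 ≤ (b.coord k).linear y}

def signedVertexCone : ι ⊕ ι → Set V := Sum.elim b.vertexCone fun i => -b.vertexCone i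

lemma smul_mem_vertexCone {i : ι} {y : V} {r : ℝ} (hr : 0 ≤ r) (hy : y ∈ b.vertexCone i) :
    r • y ∈ b.vertexCone i := fun k hk => by
  rw [map_smul, smul_eq_mul]
  exact mul_nonneg hr (hy k hk)

lemma smul_vertexCone {r : ℝ} (hr : 0 < r) (i : ι) : r • b.vertexCone i = b.vertexCone i := by
  refine (smul_set_subset_iff.2 fun y hy => b.smul_mem_vertexCone hr.le hy).antisymm
    fun y hy => ?_
  rw [← smul_inv_smul₀ hr.ne' y]
  exact smul_mem_smul_set (b.smul_mem_vertexCone (inv_nonneg.2 hr.le) hy)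

lemma smul_mem_signedVertexCone {p : ι ⊕ ι} {y : V} {r : ℝ} (hr : 0 ≤ r)
    (hy : y ∈ b.signedVertexCone p) : r • y ∈ b.signedVertexCone p := by
  rcases p with i | i
  · exact b.smul_mem_vertexCone hr hy
  · simpa only [signedVertexCone, Sum.elim_inr, Set.mem_neg, smul_neg] using
      b.smul_mem_vertexCone hr hy

lemma vertexCone_inter_vertexCone_subset [Fintype ι] {i j : ι} (hij : i ≠ j) :
    b.vertexCone i ∩ b.vertexCone j ⊆ {0} := by
  rintro y ⟨hi, hj⟩
  have hnonneg : ∀ k, 0 ≤ (b.coord k).linear y := fun k => by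
    obtain rfl | hk := eq_or_ne k i
    exacts [hj k hij, hi k hk]
  refine b.eq_zero_of_coord_linear_eq_zero fun k => ?_
  exact (Finset.sum_eq_zero_iff_of_nonneg fun k _ => hnonneg k).1 (b.sum_coord_linear_apply y) k
    (Finset.mem_univ k)

lemma vertexCone_inter_neg_vertexCone_subset (i j : ι) :
    b.vertexCone i ∩ -b.vertexCone j ⊆ {y | ∀ k, k ≠ i → k ≠ j → (b.coord k).linear y = 0} :=
  fun y ⟨hi, hj⟩ k hki hkj =>
    le_antisymm (by simpa only [map_neg, neg_nonneg] using hj k hkj) (hi k hki)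

lemma signedVertexCone_inter_subset [Fintype ι] {p q : ι ⊕ ι} (hpq : p ≠ q) :
    ∃ i j, b.signedVertexCone p ∩ b.signedVertexCone q ⊆
      {y | ∀ k, k ≠ i → k ≠ j → (b.coord k).linear y = 0} := by
  have hzero : ∀ i j,
      ({0} : Set V) ⊆ {y | ∀ k, k ≠ i → k ≠ j → (b.coord k).linear y = 0} := by
    simp
  rcases p with i | i <;> rcases q with j | j
  · exact ⟨i, j, (b.vertexCone_inter_vertexCone_subset (by simpa using hpq)).trans (hzero i j)⟩
  · exact ⟨i, j, b.vertexCone_inter_neg_vertexCone_subset i j⟩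
  · exact ⟨j, i, (inter_comm _ _).subset.trans (b.vertexCone_inter_neg_vertexCone_subset j i)⟩
  · refine ⟨i, j, fun y hy => hzero i j ?_⟩
    have := b.vertexCone_inter_vertexCone_subset (by simpa using hpq) hy
    simpa using this

lemma iUnion_signedVertexCone_eq_univ [Fintype ι] (h : Fintype.card ι ≤ 3) :
    ⋃ p, b.signedVertexCone p = univ := by
  classical
  have := b.nonempty
  refine eq_univ_of_forall fun y => mem_iUnion.2 ?_
  set neg := Finset.univ.filter fun k => (b.coord k).linear y < 0
  set pos := Finset.univ.filter fun k => 0 < (b.coord k).linear y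
  have hcard : neg.card + pos.card ≤ 3 := by
    rw [← Finset.card_union_of_disjoint (Finset.disjoint_filter.2 fun k _ h h' => by linarith)]
    exact (Finset.card_le_univ _).trans h
  rcases le_or_gt neg.card 1 with hneg | hpos
  · obtain ⟨i, hi⟩ := Finset.card_le_one_iff_subset_singleton.1 hneg
    refine ⟨.inl i, fun k hk => not_lt.1 fun hlt => hk ?_⟩
    simpa using hi (by simpa [neg] using hlt)
  · obtain ⟨i, hi⟩ := Finset.card_le_one_iff_subset_singleton.1 (show pos.card ≤ 1 by omega)
    refine ⟨.inr i, fun k hk => ?_⟩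
    rw [map_neg, neg_nonneg]
    exact not_lt.1 fun hlt => hk (by simpa using hi (by simpa [pos] using hlt))

lemma exists_notMem_iUnion_signedVertexCone [Fintype ι] (h : 4 ≤ Fintype.card ι) :
    ∃ y : V, y ∉ ⋃ p, b.signedVertexCone p := by
  classical
  obtain ⟨e⟩ := Function.Embedding.nonempty_of_card_le (α := Fin 4) (by simpa using h)
  set y := (b (e 2) -ᵥ b (e 0)) + (b (e 3) -ᵥ b (e 1))
  have hy : ∀ m : Fin 4, (b.coord (e m)).linear y = if m = 0 ∨ m = 1 then -1 else 1 := by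
    intro m
    simp only [y, map_add, AffineMap.linearMap_vsub, b.coord_apply, e.injective.eq_iff,
      vsub_eq_sub]
    fin_cases m <;> simp [Fin.ext_iff]
  simp only [mem_iUnion, not_exists]
  refine ⟨y, fun p hp => ?_⟩
  rcases p with i | i
  · obtain ⟨m, hm, hmi⟩ : ∃ m : Fin 4, (m = 0 ∨ m = 1) ∧ e m ≠ i := by
      by_contra! H
      exact absurd (e.injective ((H 0 (by simp)).trans (H 1 (by simp)).symm)) (by decide)
    have := hp (e m) hmi
    rw [hy, if_pos hm] at this
    norm_num at this
  · obtain ⟨m, hm, hmi⟩ : ∃ m : Fin 4, ¬(m = 0 ∨ m = 1) ∧ e m ≠ i := by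
      by_contra! H
      exact absurd (e.injective ((H 2 (by decide)).trans (H 3 (by decide)).symm)) (by decide)
    have := hp (e m) hmi
    rw [map_neg, hy, if_neg hm] at this
    norm_num at this

end Cones

section Normed

variable {ι V : Type*} [NormedAddCommGroup V] [NormedSpace ℝ V] (b : AffineBasis ι ℝ V)

lemma isClosed_vertexCone [FiniteDimensional ℝ V] (i : ι) : IsClosed (b.vertexCone i) := by
  simp only [vertexCone, ofPred_forall]
  exact isClosed_iInter fun k => isClosed_iInter fun _ =>
    isClosed_le continuous_const (b.coord k).linear.continuous_of_finiteDimensional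

lemma isClosed_signedVertexCone [FiniteDimensional ℝ V] (p : ι ⊕ ι) :
    IsClosed (b.signedVertexCone p) := by
  rcases p with i | i
  exacts [b.isClosed_vertexCone i, (b.isClosed_vertexCone i).neg]

lemma eventually_add_mem_convexHull_iff [FiniteDimensional ℝ V] (i : ι) :
    ∀ᶠ y in 𝓝 0, b i + y ∈ convexHull ℝ (range b) ↔ y ∈ b.vertexCone i := by
  have hcont : Continuous fun y => b.coord i (b i + y) :=
    (b.coord i).continuous_of_finiteDimensional.comp (continuous_const_add _)
  have hpos : ∀ᶠ y in 𝓝 (0 : V), 0 < b.coord i (b i + y) :=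
    continuousAt_const.eventually_lt hcont.continuousAt (by simp [b.coord_apply_eq])
  filter_upwards [hpos] with y hy
  have hcoord : ∀ k, k ≠ i → b.coord k (b i + y) = (b.coord k).linear y := fun k hk => by
    rw [add_comm, ← vadd_eq_add, AffineMap.map_vadd, b.coord_apply_ne hk, vadd_eq_add, add_zero]
  rw [b.convexHull_eq_nonneg_coord]
  refine ⟨fun h k hk => hcoord k hk ▸ h k, fun h k => ?_⟩
  obtain rfl | hk := eq_or_ne k i
  exacts [hy.le, hcoord k hk ▸ h k hk]

lemma eventually_closedBall_inter_convexHull [FiniteDimensional ℝ V] (i : ι) :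
    ∀ᶠ r in 𝓝[>] 0, closedBall (b i) r ∩ convexHull ℝ (range b) =
      b i +ᵥ (b.vertexCone i ∩ closedBall 0 r) := by
  obtain ⟨ε, hε, hcone⟩ := Metric.eventually_nhds_iff.1 (b.eventually_add_mem_convexHull_iff i)
  filter_upwards [Ioo_mem_nhdsGT hε] with r hr
  ext z
  have hz : ‖z - b i‖ ≤ r → (z ∈ convexHull ℝ (range b) ↔ z - b i ∈ b.vertexCone i) :=
    fun hzr => by
      simpa using hcone (y := z - b i) (by simpa [dist_eq_norm] using hzr.trans_lt hr.2)
  rw [mem_vadd_set_iff_neg_vadd_mem, vadd_eq_add, neg_add_eq_sub, mem_inter_iff, mem_inter_iff,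
    mem_closedBall_zero_iff, mem_closedBall, dist_eq_norm]
  exact ⟨fun ⟨hzr, hzΔ⟩ => ⟨(hz hzr).1 hzΔ, hzr⟩, fun ⟨hzK, hzr⟩ => ⟨hzr, (hz hzr).2 hzK⟩⟩

lemma exists_mem_ball_notMem_iUnion_signedVertexCone [Fintype ι] (h : 4 ≤ Fintype.card ι) :
    ∃ y ∈ ball (0 : V) 1, y ∉ ⋃ p, b.signedVertexCone p := by
  obtain ⟨y, hy⟩ := b.exists_notMem_iUnion_signedVertexCone h
  have hne : ‖y‖ + 1 ≠ 0 := by positivity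
  have ht : 0 < (‖y‖ + 1)⁻¹ := by positivity
  refine ⟨(‖y‖ + 1)⁻¹ • y, ?_, fun hty => hy ?_⟩
  · rw [mem_ball_zero_iff, norm_smul, Real.norm_of_nonneg ht.le, inv_mul_lt_iff₀ (by positivity)]
    linarith
  · obtain ⟨p, hp⟩ := mem_iUnion.1 hty
    refine mem_iUnion.2 ⟨p, ?_⟩
    simpa [smul_smul, hne] using b.smul_mem_signedVertexCone (inv_nonneg.2 ht.le) hp

end Normed

section Measure

variable {ι V : Type*} [NormedAddCommGroup V] [NormedSpace ℝ V] [FiniteDimensional ℝ V]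
  [MeasurableSpace V] [BorelSpace V] (μ : Measure V) [μ.IsAddHaarMeasure]
  (b : AffineBasis ι ℝ V)

lemma measure_vertexCone_inter_closedBall (i : ι) {r : ℝ} (hr : 0 < r) :
    μ (b.vertexCone i ∩ closedBall 0 r) =
      ENNReal.ofReal (r ^ Module.finrank ℝ V) * μ (b.vertexCone i ∩ closedBall 0 1) := by
  have : b.vertexCone i ∩ closedBall 0 r = r • (b.vertexCone i ∩ closedBall 0 1) := by
    rw [smul_set_inter₀ hr.ne', b.smul_vertexCone hr, _root_.smul_closedBall _ _ zero_le_one,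
      smul_zero, Real.norm_of_nonneg hr.le, mul_one]
  rw [this, Measure.addHaar_smul, abs_of_nonneg (by positivity)]

lemma measure_setOf_coord_linear_eq_zero [Fintype ι] (hV : 2 ≤ Module.finrank ℝ V) (i j : ι) :
    μ {y | ∀ k, k ≠ i → k ≠ j → (b.coord k).linear y = 0} = 0 := by
  let W : Submodule ℝ V := ⨅ (k) (_ : k ≠ i) (_ : k ≠ j), LinearMap.ker (b.coord k).linear
  have hW : (W : Set V) = {y | ∀ k, k ≠ i → k ≠ j → (b.coord k).linear y = 0} := by
    ext y
    simp [W]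
  -- On `W` only `ℓᵢ` and `ℓⱼ = -ℓᵢ` can be nonzero, so `ℓᵢ` is injective there.
  have hinj : Function.Injective ((b.coord i).linear ∘ₗ W.subtype) := by
    refine (injective_iff_map_eq_zero _).2 fun y hy => Subtype.ext ?_
    have hyW : (y : V) ∈ (W : Set V) := y.2
    rw [hW] at hyW
    refine b.eq_zero_of_coord_linear_eq_zero_of_ne j fun k hkj => ?_
    obtain rfl | hki := eq_or_ne k i
    exacts [hy, hyW k hki hkj]
  have hlt : W < ⊤ := Submodule.lt_top_of_finrank_lt_finrank <| by
    have := LinearMap.finrank_le_finrank_of_injective hinj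
    rw [Module.finrank_self] at this
    omega
  rw [← hW]
  exact Measure.addHaar_submodule μ W hlt.ne

lemma measure_iUnion_signedVertexCone_inter_closedBall [Fintype ι]
    (hV : 2 ≤ Module.finrank ℝ V) :
    μ ((⋃ p, b.signedVertexCone p) ∩ closedBall 0 1) =
      2 * ∑ i, μ (b.vertexCone i ∩ closedBall 0 1) := by
  have hdisj : Pairwise
      (Function.onFun (AEDisjoint μ) fun p => b.signedVertexCone p ∩ closedBall 0 1) := by
    intro p q hpq
    obtain ⟨i, j, hsub⟩ := b.signedVertexCone_inter_subset hpq
    exact measure_mono_null ((inter_subset_inter inter_subset_left inter_subset_left).trans hsub)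
      (measure_setOf_coord_linear_eq_zero μ b hV i j)
  have hmeas : ∀ p, NullMeasurableSet (b.signedVertexCone p ∩ closedBall 0 1) μ := fun p =>
    ((b.isClosed_signedVertexCone p).measurableSet.inter measurableSet_closedBall).nullMeasurableSet
  rw [iUnion_inter, measure_iUnion₀ hdisj hmeas, tsum_fintype, Fintype.sum_sum_type, two_mul]
  congr 1
  refine Finset.sum_congr rfl fun i _ => ?_
  rw [← Measure.measure_neg μ (b.vertexCone i ∩ _), inter_neg, neg_closedBall, neg_zero]
  rfl

lemma measure_iUnion_signedVertexCone_inter_closedBall_lt [Fintype ι] (h : 4 ≤ Fintype.card ι) :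
    μ ((⋃ p, b.signedVertexCone p) ∩ closedBall 0 1) < μ (closedBall 0 1) := by
  obtain ⟨y, hyB, hyC⟩ := b.exists_mem_ball_notMem_iUnion_signedVertexCone h
  have hC : IsClosed (⋃ p, b.signedVertexCone p) :=
    isClosed_iUnion_of_finite b.isClosed_signedVertexCone
  have hgap : 0 < μ (closedBall 0 1 \ ⋃ p, b.signedVertexCone p) :=
    ((isOpen_ball.sdiff hC).measure_pos μ ⟨y, hyB, hyC⟩).trans_le
      (measure_mono (sdiff_subset_sdiff_left ball_subset_closedBall))
  rw [← measure_inter_add_sdiff (closedBall 0 1) hC.measurableSet, inter_comm]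
  exact ENNReal.lt_add_right
    (measure_ne_top_of_subset inter_subset_left measure_closedBall_lt_top.ne) hgap.ne'

end Measure

section EuclideanSpace

variable {ι : Type*} {d : ℕ} (b : AffineBasis ι ℝ (EuclideanSpace ℝ (Fin d)))

lemma solidAngle_convexHull_eq_measure_vertexCone (i : ι) :
    solidAngle (convexHull ℝ (range b)) (b i) =
      (volume (b.vertexCone i ∩ closedBall 0 1)).toReal /
        (volume (closedBall (0 : EuclideanSpace ℝ (Fin d)) 1)).toReal := by
  refine Tendsto.limUnder_eq (tendsto_const_nhds.congr' ?_)
  filter_upwards [b.eventually_closedBall_inter_convexHull i, self_mem_nhdsWithin]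
    with r hr (hr0 : 0 < r)
  have hc : (ENNReal.ofReal (r ^ d)).toReal ≠ 0 := by
    rw [ENNReal.toReal_ofReal (by positivity)]
    positivity
  rw [angleRatio, hr, measure_vadd, measure_vertexCone_inter_closedBall volume b i hr0,
    Measure.addHaar_closedBall' volume _ hr0.le, finrank_euclideanSpace_fin, ENNReal.toReal_mul,
    ENNReal.toReal_mul, mul_div_mul_left _ _ hc]

lemma two_mul_sum_solidAngle_convexHull [Fintype ι] (hd : 2 ≤ d) :
    2 * ∑ i, solidAngle (convexHull ℝ (range b)) (b i) =
      (volume ((⋃ p, b.signedVertexCone p) ∩ closedBall 0 1)).toReal /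
        (volume (closedBall (0 : EuclideanSpace ℝ (Fin d)) 1)).toReal := by
  have hfin : ∀ i, volume (b.vertexCone i ∩ closedBall 0 1) ≠ ⊤ :=
    fun i => measure_ne_top_of_subset inter_subset_right measure_closedBall_lt_top.ne
  simp_rw [solidAngle_convexHull_eq_measure_vertexCone]
  rw [measure_iUnion_signedVertexCone_inter_closedBall volume b (by simpa using hd),
    ENNReal.toReal_mul, ENNReal.toReal_sum fun i _ => hfin i, ← Finset.sum_div, mul_div_assoc]
  norm_num

end EuclideanSpace

end AffineBasis

/-- For a `d`-simplex `Δ`, the sum `S(Δ)` of the solid angles at the vertices equals `1/2`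
when `d = 2` and is strictly less than `1/2` when `d > 2`. -/
theorem vertex_solidAngle_sum {d : ℕ} (v : Fin (d + 1) → EuclideanSpace ℝ (Fin d))
    (hv : AffineIndependent ℝ v) :
    (d = 2 → ∑ i, solidAngle (convexHull ℝ (range v)) (v i) = 1 / 2) ∧
    (2 < d → ∑ i, solidAngle (convexHull ℝ (range v)) (v i) < 1 / 2) := by
  let b : AffineBasis (Fin (d + 1)) ℝ (EuclideanSpace ℝ (Fin d)) :=
    ⟨v, hv, hv.affineSpan_eq_top_iff_card_eq_finrank_add_one.2 (by simp)⟩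
  have hB : 0 < (volume (closedBall (0 : EuclideanSpace ℝ (Fin d)) 1)).toReal :=
    ENNReal.toReal_pos (measure_closedBall_pos volume _ one_pos).ne' measure_closedBall_lt_top.ne
  constructor
  · rintro rfl
    have h := b.two_mul_sum_solidAngle_convexHull le_rfl
    rw [b.iUnion_signedVertexCone_eq_univ (by simp), univ_inter, div_self hB.ne'] at h
    change 2 * ∑ i, solidAngle (convexHull ℝ (range v)) (v i) = 1 at h
    linarith
  · intro hd
    have h := b.two_mul_sum_solidAngle_convexHull hd.le
    change 2 * ∑ i, solidAngle (convexHull ℝ (range v)) (v i) = _ at h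
    have hlt := (div_lt_one hB).2 <| ENNReal.toReal_strict_mono measure_closedBall_lt_top.ne
      (b.measure_iUnion_signedVertexCone_inter_closedBall_lt volume (by rw [Fintype.card_fin]; omega))
    linarith
end

section
/- For a polyhedral cone K ⊂ ℝ^d with apex x, the solid angles of the prism K × [0,1] at the two points (x,0) and (x,1) are equal, and ω_{K×[0,1]}((x,0)) ≤ c·ω_K(x), where c = vol(B_d(1))/vol(B_{d+1}(1)) is the ratio of the volumes of the d-dimensional and (d+1)-dimensional unit balls. -/
/-!
The map `y ↦ (init y, 1 - y_last)` is an isometry of `ℝ^{d+1}` that preserves the prism and swaps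
`(x,0)` and `(x,1)`, so the two solid angles agree. Near `(x,0)` the prism coincides with the cone
`K × [0,∞)` with apex `(x,0)`, and for a cone `vol(B(r) ∩ C) / vol(B(r))` does not depend on `r`;
so both `ω_{K×[0,1]}((x,0))` and `ω_K(x)` can be read off at radius `1`. There the unit ball
around `(x,0)` meets the prism inside `(B_d(x,1) ∩ K) × [0,1]`, a set of volume
`vol(B_d(x,1) ∩ K)`, which gives the bound.
-/

open MeasureTheory Metric Set Filter Pointwise

local notation "𝔼" n:max => EuclideanSpace ℝ (Fin n)

section SolidAngle

variable {n : ℕ} {P : Set (𝔼 n)}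

lemma volume_preimage_isometryEquiv (e : 𝔼 n ≃ᵢ 𝔼 n) (s : Set (𝔼 n)) :
    volume (e ⁻¹' s) = volume s := by
  rw [← EuclideanSpace.euclideanHausdorffMeasure_eq_volume,
    e.isometry.euclideanHausdorffMeasure_preimage, e.range_eq_univ, inter_univ]

lemma angleRatio_isometryEquiv (e : 𝔼 n ≃ᵢ 𝔼 n) (he : e ⁻¹' P = P) (x : 𝔼 n) :
    angleRatio P (e x) = angleRatio P x := by
  funext r
  rw [angleRatio, ← volume_preimage_isometryEquiv e (closedBall (e x) r ∩ P),
    ← volume_preimage_isometryEquiv e (closedBall (e x) r), preimage_inter, he,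
    e.isometry.preimage_closedBall, angleRatio]

lemma solidAngle_isometryEquiv (e : 𝔼 n ≃ᵢ 𝔼 n) (he : e ⁻¹' P = P) (x : 𝔼 n) :
    solidAngle P (e x) = solidAngle P x := by
  rw [solidAngle, angleRatio_isometryEquiv e he, solidAngle]

lemma solidAngle_eq_angleRatio_one {x : 𝔼 n}
    (h : ∀ r ∈ Ioc (0 : ℝ) 1, angleRatio P x r = angleRatio P x 1) :
    solidAngle P x = angleRatio P x 1 :=
  (tendsto_const_nhds.congr' (eventually_of_mem (Ioc_mem_nhdsGT one_pos) fun r hr =>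
    (h r hr).symm)).limUnder_eq

end SolidAngle

section Cone

def IsConeWithApex {E : Type*} [AddCommGroup E] [Module ℝ E] (C : Set E) (c : E) : Prop :=
  ∀ y ∈ C, ∀ t : ℝ, 0 ≤ t → c + t • (y - c) ∈ C

section NormedSpace

variable {E : Type*} [NormedAddCommGroup E] [NormedSpace ℝ E] {C : Set E} {c : E}

lemma image_homothety_closedBall_inter_cone (hcone : IsConeWithApex C c) {r : ℝ} (hr : 0 < r) :
    AffineMap.homothety c r '' (closedBall c 1 ∩ C) = closedBall c r ∩ C := by
  have homothety_eq : ∀ (t : ℝ) y, AffineMap.homothety c t y = c + t • (y - c) := fun t y => by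
    rw [AffineMap.homothety_apply, vsub_eq_sub, vadd_eq_add, add_comm]
  apply Subset.antisymm
  · rintro _ ⟨y, ⟨hy, hyC⟩, rfl⟩
    refine ⟨?_, homothety_eq r y ▸ hcone y hyC r hr.le⟩
    rw [mem_closedBall, dist_homothety_center, Real.norm_of_nonneg hr.le, dist_comm]
    exact mul_le_of_le_one_right hr.le hy
  · rintro z ⟨hz, hzC⟩
    refine ⟨AffineMap.homothety c r⁻¹ z,
      ⟨?_, homothety_eq r⁻¹ z ▸ hcone z hzC _ (by positivity)⟩, ?_⟩
    · rw [mem_closedBall, dist_homothety_center, Real.norm_of_nonneg (by positivity), dist_comm]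
      exact inv_mul_le_one_of_le₀ hz hr.le
    · rw [← AffineMap.homothety_mul_apply, mul_inv_cancel₀ hr.ne', AffineMap.homothety_one,
        AffineMap.id_apply]

lemma addHaar_closedBall_inter_cone [MeasurableSpace E] [BorelSpace E] [FiniteDimensional ℝ E]
    (μ : Measure E) [μ.IsAddHaarMeasure] (hcone : IsConeWithApex C c) {r : ℝ} (hr : 0 < r) :
    μ (closedBall c r ∩ C) = ENNReal.ofReal (r ^ Module.finrank ℝ E) * μ (closedBall c 1 ∩ C) := by
  rw [← image_homothety_closedBall_inter_cone hcone hr, Measure.addHaar_image_homothety,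
    abs_of_pos (pow_pos hr _)]

end NormedSpace

variable {n : ℕ} {C : Set (𝔼 n)} {c : 𝔼 n}

lemma angleRatio_cone (hcone : IsConeWithApex C c) {r : ℝ} (hr : 0 < r) :
    angleRatio C c r = angleRatio C c 1 := by
  have hball := addHaar_closedBall_inter_cone volume (C := univ) (c := c)
    (fun _ _ _ _ => mem_univ _) hr
  rw [inter_univ, inter_univ] at hball
  rw [angleRatio, angleRatio, addHaar_closedBall_inter_cone volume hcone hr, hball,
    ENNReal.toReal_mul, ENNReal.toReal_mul, ENNReal.toReal_ofReal (pow_pos hr _).le,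
    mul_div_mul_left _ _ (pow_pos hr _).ne']

lemma solidAngle_cone (hcone : IsConeWithApex C c) : solidAngle C c = angleRatio C c 1 :=
  solidAngle_eq_angleRatio_one fun _ hr => angleRatio_cone hcone hr.1

end Cone

section Prism

variable {d : ℕ}

def euclideanInit (y : 𝔼 (d + 1)) : 𝔼 d :=
  WithLp.toLp 2 (Fin.init y.ofLp)

def euclideanSnoc (x : 𝔼 d) (a : ℝ) : 𝔼 (d + 1) :=
  WithLp.toLp 2 (Fin.snoc x a)

@[simp]
lemma euclideanInit_snoc (x : 𝔼 d) (a : ℝ) : euclideanInit (euclideanSnoc x a) = x := by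
  ext i
  simp [euclideanInit, euclideanSnoc]

@[simp]
lemma euclideanSnoc_last (x : 𝔼 d) (a : ℝ) : euclideanSnoc x a (Fin.last d) = a := by
  simp [euclideanSnoc]

lemma euclideanInit_add_smul_sub (u y : 𝔼 (d + 1)) (t : ℝ) :
    euclideanInit (u + t • (y - u)) =
      euclideanInit u + t • (euclideanInit y - euclideanInit u) := by
  ext i
  simp [euclideanInit, Fin.init]

lemma dist_euclideanInit_le (y z : 𝔼 (d + 1)) :
    dist (euclideanInit y) (euclideanInit z) ≤ dist y z := by
  rw [EuclideanSpace.dist_eq, EuclideanSpace.dist_eq, Fin.sum_univ_castSucc]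
  exact Real.sqrt_le_sqrt (le_add_of_nonneg_right (sq_nonneg _))

lemma measurePreserving_last_init :
    MeasurePreserving (fun y : 𝔼 (d + 1) => (y (Fin.last d), euclideanInit y)) := by
  have split := ((MeasurePreserving.id (volume : Measure ℝ)).prod
      (PiLp.volume_preserving_toLp (Fin d))).comp
    ((volume_preserving_piFinSuccAbove (fun _ : Fin (d + 1) => ℝ) (Fin.last d)).comp
      (PiLp.volume_preserving_ofLp (Fin (d + 1))))
  convert split using 1
  · funext y
    simp [euclideanInit]
  · exact Measure.volume_eq_prod _ _

def prism (K : Set (𝔼 d)) : Set (𝔼 (d + 1)) :=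
  {y | euclideanInit y ∈ K ∧ y (Fin.last d) ∈ Icc 0 1}

def halfCylinder (K : Set (𝔼 d)) : Set (𝔼 (d + 1)) :=
  {y | euclideanInit y ∈ K ∧ 0 ≤ y (Fin.last d)}

variable {K : Set (𝔼 d)} {x : 𝔼 d}

lemma halfCylinder_isConeWithApex (hcone : IsConeWithApex K x) :
    IsConeWithApex (halfCylinder K) (euclideanSnoc x 0) := by
  rintro y ⟨hyK, hy⟩ t ht
  refine ⟨?_, ?_⟩
  · rw [euclideanInit_add_smul_sub, euclideanInit_snoc]
    exact hcone _ hyK t ht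
  · simpa using mul_nonneg ht hy

lemma closedBall_inter_prism {r : ℝ} (hr : r ≤ 1) :
    closedBall (euclideanSnoc x 0) r ∩ prism K =
      closedBall (euclideanSnoc x 0) r ∩ halfCylinder K := by
  ext y
  simp only [mem_inter_iff, prism, halfCylinder, mem_ofPred_eq, mem_Icc]
  refine ⟨fun ⟨hb, hK, h0, _⟩ => ⟨hb, hK, h0⟩, fun ⟨hb, hK, h0⟩ => ⟨hb, hK, h0, ?_⟩⟩
  calc y (Fin.last d) ≤ dist (y (Fin.last d)) (euclideanSnoc x 0 (Fin.last d)) := by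
        simpa [Real.dist_eq] using le_abs_self _
    _ ≤ dist y (euclideanSnoc x 0) := PiLp.dist_apply_le _ _ _
    _ ≤ 1 := hb.trans hr

lemma solidAngle_prism_eq_angleRatio_one (hcone : IsConeWithApex K x) :
    solidAngle (prism K) (euclideanSnoc x 0) = angleRatio (prism K) (euclideanSnoc x 0) 1 := by
  have near_apex : ∀ r ≤ 1, angleRatio (prism K) (euclideanSnoc x 0) r =
      angleRatio (halfCylinder K) (euclideanSnoc x 0) r := fun r hr => by
    rw [angleRatio, closedBall_inter_prism hr, angleRatio]
  refine solidAngle_eq_angleRatio_one fun r hr => ?_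
  rw [near_apex r hr.2, near_apex 1 le_rfl,
    angleRatio_cone (halfCylinder_isConeWithApex hcone) hr.1]

lemma angleRatio_prism_le (K : Set (𝔼 d)) (x : 𝔼 d) :
    angleRatio (prism K) (euclideanSnoc x 0) 1 ≤
      ((volume (closedBall (0 : 𝔼 d) 1)).toReal / (volume (closedBall (0 : 𝔼 (d + 1)) 1)).toReal) *
        angleRatio K x 1 := by
  rw [angleRatio, angleRatio, Measure.addHaar_closedBall_center volume (euclideanSnoc x 0),
    Measure.addHaar_closedBall_center volume x]
  set S := closedBall x 1 ∩ K
  have hsub : closedBall (euclideanSnoc x 0) 1 ∩ prism K ⊆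
      (fun y : 𝔼 (d + 1) => (y (Fin.last d), euclideanInit y)) ⁻¹' (Icc 0 1 ×ˢ S) := by
    rintro y ⟨hb, hyK, hy⟩
    refine ⟨hy, ?_, hyK⟩
    simpa using (dist_euclideanInit_le y (euclideanSnoc x 0)).trans hb
  have hvol : volume (closedBall (euclideanSnoc x 0) 1 ∩ prism K) ≤ volume S :=
    calc _ ≤ _ := measure_mono hsub
      _ ≤ _ := Measure.le_map_apply measurePreserving_last_init.measurable.aemeasurable _
      _ = volume S := by
        rw [measurePreserving_last_init.map_eq, Measure.volume_eq_prod, Measure.prod_prod,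
          Real.volume_Icc, sub_zero, ENNReal.ofReal_one, one_mul]
  have hS : volume S ≠ ⊤ :=
    (measure_mono inter_subset_left).trans_lt measure_closedBall_lt_top |>.ne
  have ball_pos : ∀ n, 0 < (volume (closedBall (0 : 𝔼 n) 1)).toReal := fun n =>
    ENNReal.toReal_pos (measure_closedBall_pos volume 0 one_pos).ne' measure_closedBall_lt_top.ne
  calc _ ≤ (volume S).toReal / (volume (closedBall (0 : 𝔼 (d + 1)) 1)).toReal :=
        div_le_div_of_nonneg_right (ENNReal.toReal_mono hS hvol) (ball_pos _).le
    _ = _ := by field_simp [(ball_pos d).ne']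

noncomputable def flipLast (d : ℕ) : 𝔼 (d + 1) ≃ᵢ 𝔼 (d + 1) :=
  (LinearIsometryEquiv.piLpCongrRight 2 fun i =>
      if i = Fin.last d then LinearIsometryEquiv.neg ℝ else LinearIsometryEquiv.refl ℝ ℝ)
    |>.toIsometryEquiv.trans (IsometryEquiv.addLeft (euclideanSnoc 0 1))

lemma flipLast_apply (y : 𝔼 (d + 1)) :
    flipLast d y = euclideanSnoc (euclideanInit y) (1 - y (Fin.last d)) := by
  ext i
  induction i using Fin.lastCases with
  | last => simp [flipLast, sub_eq_add_neg]
  | cast i => simp [flipLast, euclideanInit, Fin.init, euclideanSnoc, (Fin.castSucc_lt_last i).ne]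

lemma preimage_flipLast_prism (K : Set (𝔼 d)) : flipLast d ⁻¹' prism K = prism K := by
  ext y
  simp only [mem_preimage, prism, mem_ofPred_eq, flipLast_apply, euclideanInit_snoc,
    euclideanSnoc_last, mem_Icc, sub_nonneg, tsub_le_iff_right]
  constructor <;> rintro ⟨hK, h0, h1⟩ <;> exact ⟨hK, by linarith, by linarith⟩

end Prism

theorem solidAngle_prism_general {d : ℕ} (K : Set (EuclideanSpace ℝ (Fin d)))
    (x : EuclideanSpace ℝ (Fin d))
    (hcone : ∀ y ∈ K, ∀ t : ℝ, 0 ≤ t → x + t • (y - x) ∈ K)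
    (P : Set (EuclideanSpace ℝ (Fin (d + 1))))
    (hP : P = {y | (WithLp.toLp 2 (fun i : Fin d => y i.castSucc) : EuclideanSpace ℝ (Fin d)) ∈ K ∧
      y (Fin.last d) ∈ Icc (0 : ℝ) 1}) :
    solidAngle P (WithLp.toLp 2 (Fin.snoc x 0 : Fin (d + 1) → ℝ) : EuclideanSpace ℝ (Fin (d + 1))) =
      solidAngle P (WithLp.toLp 2 (Fin.snoc x 1 : Fin (d + 1) → ℝ) : EuclideanSpace ℝ (Fin (d + 1))) ∧
    solidAngle P (WithLp.toLp 2 (Fin.snoc x 0 : Fin (d + 1) → ℝ) : EuclideanSpace ℝ (Fin (d + 1))) ≤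
      ((volume (closedBall (0 : EuclideanSpace ℝ (Fin d)) 1)).toReal /
          (volume (closedBall (0 : EuclideanSpace ℝ (Fin (d + 1))) 1)).toReal) *
        solidAngle K x := by
  obtain rfl : P = prism K := hP
  change solidAngle (prism K) (euclideanSnoc x 0) = solidAngle (prism K) (euclideanSnoc x 1) ∧
    solidAngle (prism K) (euclideanSnoc x 0) ≤ _ * solidAngle K x
  refine ⟨?_, ?_⟩
  · rw [← solidAngle_isometryEquiv (flipLast d) (preimage_flipLast_prism K), flipLast_apply,
      euclideanInit_snoc, euclideanSnoc_last, sub_zero]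
  · rw [solidAngle_prism_eq_angleRatio_one hcone, solidAngle_cone hcone]
    exact angleRatio_prism_le K x

/-- For a closed convex polyhedral cone `K ⊂ ℝ^d` with apex `x`, the solid angles of the
prism `K × [0,1] ⊂ ℝ^{d+1}` at `(x,0)` and `(x,1)` agree, and
`ω_{K×[0,1]}((x,0)) ≤ c · ω_K(x)` with `c = vol(B_d(1))/vol(B_{d+1}(1))`. -/
theorem solidAngle_prism {d : ℕ} (K : Set (EuclideanSpace ℝ (Fin d)))
    (x : EuclideanSpace ℝ (Fin d))
    (hclosed : IsClosed K) (hconv : Convex ℝ K) (hx : x ∈ K)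
    (hcone : ∀ y ∈ K, ∀ t : ℝ, 0 ≤ t → x + t • (y - x) ∈ K)
    (hpoly : ∃ (n : ℕ) (a : Fin n → EuclideanSpace ℝ (Fin d)) (b : Fin n → ℝ),
      K = {y | ∀ i, (inner ℝ (a i) y : ℝ) ≤ b i})
    (P : Set (EuclideanSpace ℝ (Fin (d + 1))))
    (hP : P = {y | (WithLp.toLp 2 (fun i : Fin d => y i.castSucc) : EuclideanSpace ℝ (Fin d)) ∈ K ∧
      y (Fin.last d) ∈ Icc (0 : ℝ) 1}) :
    solidAngle P (WithLp.toLp 2 (Fin.snoc x 0 : Fin (d + 1) → ℝ) : EuclideanSpace ℝ (Fin (d + 1))) =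
      solidAngle P (WithLp.toLp 2 (Fin.snoc x 1 : Fin (d + 1) → ℝ) : EuclideanSpace ℝ (Fin (d + 1))) ∧
    solidAngle P (WithLp.toLp 2 (Fin.snoc x 0 : Fin (d + 1) → ℝ) : EuclideanSpace ℝ (Fin (d + 1))) ≤
      ((volume (closedBall (0 : EuclideanSpace ℝ (Fin d)) 1)).toReal /
          (volume (closedBall (0 : EuclideanSpace ℝ (Fin (d + 1))) 1)).toReal) *
        solidAngle K x :=
  solidAngle_prism_general K x hcone P hP
end

section
/- Let x = (x₁,...,x_d) ∈ ℝ^d satisfy x_d > 0 and |x₁| + ⋯ + |x_d| < 1. Then there exist real numbers h₁,...,h_{d−1} (namely h_i = x_i/x_d when x_i < 0 and h_i = 0 otherwise; in fact h_i ≤ 0 suffice when chosen appropriately) such that x lies in the convex hull of 0, e₁, ..., e_{d−1}, (h₁,...,h_{d−1},1). -/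
open Set

/-! With `t = x_d > 0`, the point `x` decomposes as
`x = t • (h, 1) + ∑ i, max(xᵢ, 0) • eᵢ`, where `t hᵢ = min(xᵢ, 0)`, because `xᵢ = max(xᵢ, 0) + min(xᵢ, 0)`.
The weights are nonnegative and sum to at most `∑ |xᵢ| < 1`; the missing weight goes to the vertex `0`. -/

theorem smul_add_sum_smul_mem_convexHull_insert_zero {𝕜 E ι : Type*} [Field 𝕜] [LinearOrder 𝕜]
    [IsStrictOrderedRing 𝕜] [AddCommGroup E] [Module 𝕜 E] [Fintype ι]
    {a : 𝕜} {v : E} {w : ι → 𝕜} {z : ι → E}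
    (ha : 0 ≤ a) (hw : ∀ i, 0 ≤ w i) (hsum : a + ∑ i, w i ≤ 1) :
    a • v + ∑ i, w i • z i ∈ convexHull 𝕜 (insert 0 (insert v (range z))) := by
  have hcomb : ∑ o : Option (Option ι), o.elim (1 - a - ∑ i, w i) (·.elim a w) •
      o.elim 0 (·.elim v z) = a • v + ∑ i, w i • z i := by
    simp [Fintype.sum_option]
  rw [← hcomb]
  refine (convex_convexHull 𝕜 _).sum_mem (fun o _ => ?_) ?_ (fun o _ => subset_convexHull 𝕜 _ ?_)
  · rcases o with _ | _ | i
    exacts [sub_nonneg.2 (le_sub_iff_add_le'.2 hsum), ha, hw i]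
  · simp only [Fintype.sum_option, Option.elim]
    ring
  · rcases o with _ | _ | i
    exacts [mem_insert _ _, mem_insert_of_mem _ (mem_insert _ _),
      mem_insert_of_mem _ (mem_insert_of_mem _ ⟨i, rfl⟩)]

theorem eq_smul_snoc_add_sum_smul_single {n : ℕ} (x : EuclideanSpace ℝ (Fin (n + 1)))
    (hx : x (Fin.last n) ≠ 0) :
    x = x (Fin.last n) • WithLp.toLp 2
        (Fin.snoc (fun i => min (x i.castSucc) 0 / x (Fin.last n)) 1 : Fin (n + 1) → ℝ) +
      ∑ i : Fin n, max (x i.castSucc) 0 • EuclideanSpace.single i.castSucc (1 : ℝ) := by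
  ext j
  induction j using Fin.lastCases with
  | last => simp [(Fin.castSucc_lt_last _).ne']
  | cast j =>
    simp [Pi.single_apply, mul_div_cancel₀ _ hx, min_add_max]

theorem mem_heightSimplex_of_small_general {n : ℕ}
    (x : EuclideanSpace ℝ (Fin (n + 1)))
    (hxd : 0 < x (Fin.last n)) (hsum : ∑ i, |x i| < 1) :
    ∃ h : Fin n → ℝ, (∀ i, h i ≤ 0) ∧
      x ∈ convexHull ℝ
        (insert (0 : EuclideanSpace ℝ (Fin (n + 1)))
          (insert (WithLp.toLp 2 (Fin.snoc h 1 : Fin (n + 1) → ℝ) : EuclideanSpace ℝ (Fin (n + 1)))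
            (Set.range fun i : Fin n => EuclideanSpace.single i.castSucc (1 : ℝ)))) := by
  refine ⟨fun i => min (x i.castSucc) 0 / x (Fin.last n),
    fun i => div_nonpos_of_nonpos_of_nonneg (min_le_right _ _) hxd.le, ?_⟩
  have hweights : x (Fin.last n) + ∑ i : Fin n, max (x i.castSucc) 0 ≤ 1 := by
    have hpos : ∑ i : Fin n, max (x i.castSucc) 0 ≤ ∑ i : Fin n, |x i.castSucc| :=
      Finset.sum_le_sum fun i _ => max_le (le_abs_self _) (abs_nonneg _)
    rw [Fin.sum_univ_castSucc] at hsum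
    linarith [le_abs_self (x (Fin.last n))]
  convert smul_add_sum_smul_mem_convexHull_insert_zero
    (w := fun i : Fin n => max (x i.castSucc) 0) hxd.le (fun _ => le_max_right _ _) hweights
  exact eq_smul_snoc_add_sum_smul_single x hxd.ne'

/-- If `x ∈ ℝ^{n+1}` has positive last coordinate and `Σ|xᵢ| < 1`, then there are
nonpositive reals `h₁,…,h_n` with `x ∈ conv{0, e₁,…,e_n, (h₁,…,h_n,1)}`. -/
theorem mem_heightSimplex_of_small {n : ℕ} (hn : 1 ≤ n)
    (x : EuclideanSpace ℝ (Fin (n + 1)))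
    (hxd : 0 < x (Fin.last n)) (hsum : ∑ i, |x i| < 1) :
    ∃ h : Fin n → ℝ, (∀ i, h i ≤ 0) ∧
      x ∈ convexHull ℝ
        (insert (0 : EuclideanSpace ℝ (Fin (n + 1)))
          (insert (WithLp.toLp 2 (Fin.snoc h 1 : Fin (n + 1) → ℝ) : EuclideanSpace ℝ (Fin (n + 1)))
            (Set.range fun i : Fin n => EuclideanSpace.single i.castSucc (1 : ℝ)))) :=
  mem_heightSimplex_of_small_general x hxd hsum
end
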